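/- arXiv:1705.05554 — 7 statements merged into one kernel-verified Lean document; each statement's English description precedes it below -/
import Mathlib

section
/- For every odd integer l with 1 ≤ l ≤ 2n-1, the sum ∑_{k=0}^{min(l,n)} (-2)^k * C(l,k) * C(2n-k, n) equals 0. -/
open Polynomial Finset

private lemma rev_pow (p : ℤ[X]) (m : ℕ) : (p ^ m).reverse = p.reverse ^ m := by
  induction m with
  | zero => rw [pow_zero, pow_zero, ← C_1, reverse_C]
  | succ m ih => rw [pow_succ, reverse_mul_of_domain, ih, pow_succ]

private lemma rev_X_sub_one : (X - 1 : ℤ[X]).reverse = -(X - 1) := by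
  have h : (X - 1 : ℤ[X]) = X + C (-1) := by simp [sub_eq_add_neg]
  rw [h, reverse_add_C]
  simp [reverse]

private lemma rev_X_add_one : (X + 1 : ℤ[X]).reverse = X + 1 := by
  have h : (X + 1 : ℤ[X]) = X + C 1 := by simp
  rw [h, reverse_add_C]
  simp [reverse, add_comm]

private lemma key (n l : ℕ) (hl : Odd l) (hln : l ≤ 2 * n) :
    ((X - 1) ^ l * (X + 1) ^ (2 * n - l) : ℤ[X]).coeff n = 0 := by
  set P : ℤ[X] := (X - 1) ^ l * (X + 1) ^ (2 * n - l) with hP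
  have hdeg : P.natDegree = 2 * n := by
    have h1 : (X - 1 : ℤ[X]) = X - C 1 := by simp
    have h2 : (X + 1 : ℤ[X]) = X + C 1 := by simp
    have hm1 : ((X - 1 : ℤ[X]) ^ l).Monic := by
      rw [h1]; exact (monic_X_sub_C 1).pow l
    have hm2 : ((X + 1 : ℤ[X]) ^ (2 * n - l)).Monic := by
      rw [h2]; exact (monic_X_add_C 1).pow _
    rw [hP, hm1.natDegree_mul hm2, natDegree_pow, natDegree_pow, h1, h2,
      natDegree_X_sub_C, natDegree_X_add_C]
    omega
  have hrev : P.reverse = -P := by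
    rw [hP, reverse_mul_of_domain, rev_pow, rev_pow, rev_X_sub_one, rev_X_add_one,
      hl.neg_pow]
    ring
  have h1 : P.reverse.coeff n = P.coeff n := by
    rw [coeff_reverse, hdeg, revAt_le (by omega : n ≤ 2 * n)]
    congr 1
    omega
  rw [hrev, coeff_neg] at h1
  linarith

private lemma expand_sum (n l : ℕ) (hln : l ≤ 2 * n) :
    ((X - 1) ^ l * (X + 1) ^ (2 * n - l) : ℤ[X]).coeff n =
      ∑ k ∈ Finset.range (l + 1),
        (-2 : ℤ) ^ k * (l.choose k) * ((2 * n - k).choose n) := by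
  have hx : (X - 1 : ℤ[X]) = (-2 : ℤ[X]) + (X + 1) := by ring
  rw [hx, add_pow, Finset.sum_mul, Polynomial.finset_sum_coeff]
  apply Finset.sum_congr rfl
  intro k hk
  rw [Finset.mem_range] at hk
  have hkl : k ≤ l := by omega
  have hE : (X + 1 : ℤ[X]) ^ (l - k) * (X + 1) ^ (2 * n - l) = (X + 1) ^ (2 * n - k) := by
    rw [← pow_add]
    congr 1
    omega
  have heq : ((-2 : ℤ[X]) ^ k * (X + 1) ^ (l - k) * (l.choose k : ℤ[X])) *
      (X + 1) ^ (2 * n - l) = C ((-2 : ℤ) ^ k * (l.choose k : ℤ)) * (X + 1) ^ (2 * n - k) := by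
    rw [← hE]
    simp only [map_mul, map_pow, map_neg, map_ofNat, C_eq_natCast]
    ring
  rw [heq, coeff_C_mul, Polynomial.coeff_X_add_one_pow]

theorem sum_neg_two_pow_choose_eq_zero (n : ℕ) (hn : 1 ≤ n) (l : ℕ) (hl : Odd l)
    (hl1 : 1 ≤ l) (hl2 : l ≤ 2 * n - 1) :
    ∑ k ∈ Finset.range (min l n + 1),
      (-2 : ℤ) ^ k * (l.choose k) * ((2 * n - k).choose n) = 0 := by
  have hln : l ≤ 2 * n := by omega
  have hfull : ∑ k ∈ Finset.range (l + 1),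
      (-2 : ℤ) ^ k * (l.choose k) * ((2 * n - k).choose n) = 0 := by
    rw [← expand_sum n l hln]
    exact key n l hl hln
  rw [← hfull]
  apply Finset.sum_subset
  · apply Finset.range_subset_range.2; omega
  · intro k hk hk'
    rw [Finset.mem_range] at hk hk'
    have h1 : n < k := by omega
    have h2 : 2 * n - k < n := by omega
    rw [Nat.choose_eq_zero_of_lt h2]
    push_cast
    ring
end

section
/- The coefficient of z^n in the polynomial (1+z)^{2n-l} (z-1)^l equals ∑_{k=0}^{min(l,n)} (-2)^k * C(l,k) * C(2n-k, n). -/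
open Polynomial in
theorem coeff_n_one_add_X_pow_mul_X_sub_one_pow (n l : ℕ) (hl : l ≤ 2 * n) :
    (((1 + X) ^ (2 * n - l) * (X - 1) ^ l : Polynomial ℤ)).coeff n =
      ∑ k ∈ Finset.range (min l n + 1),
        (-2 : ℤ) ^ k * (l.choose k) * ((2 * n - k).choose n) := by
  have key : ((1 + X) ^ (2 * n - l) * (X - 1) ^ l : Polynomial ℤ)
      = ∑ k ∈ Finset.range (l + 1),
          C ((-2 : ℤ) ^ k * l.choose k) * (1 + X) ^ (2 * n - k) := by
    have h1 : (X - 1 : Polynomial ℤ) = (1 + X) + (-2) := by ring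
    have h2 : ((1 + X) + (-2) : Polynomial ℤ) ^ l
        = ∑ k ∈ Finset.range (l + 1), (1 + X) ^ k * (-2) ^ (l - k) * l.choose k :=
      add_pow _ _ _
    rw [h1, h2, Finset.mul_sum, ← Finset.sum_range_reflect]
    apply Finset.sum_congr rfl
    intro k hk
    simp only [Finset.mem_range] at hk
    have hk' : k ≤ l := Nat.lt_succ_iff.mp hk
    have h2 : l + 1 - 1 - k = l - k := by omega
    have h3 : 2 * n - l + (l - k) = 2 * n - k := by omega
    rw [h2, Nat.sub_sub_self hk', Nat.choose_symm hk']
    rw [← h3, pow_add]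
    simp only [map_mul, map_pow, map_neg, map_ofNat, Polynomial.C_eq_natCast]
    ring
  rw [key]
  simp only [Polynomial.finset_sum_coeff, Polynomial.coeff_C_mul,
    Polynomial.coeff_one_add_X_pow]
  rw [← Finset.sum_subset (Finset.range_subset_range.mpr (by omega : min l n + 1 ≤ l + 1))]
  intro k hk hk'
  simp only [Finset.mem_range] at hk hk'
  have : 2 * n - k < n := by omega
  rw [Nat.choose_eq_zero_of_lt this]
  simp
end

section
/- Define a_0 = 1 and a_k = C(n,k) * (2n-k)! / (2n)! * 2^k for 1 ≤ k ≤ n. Then for every odd l with 1 ≤ l ≤ 2n-1, ∑_{k=0}^{min(l,n)} 2*(-1)^{k+1} / (l-k)! * a_k = 0. -/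
open Polynomial Finset

lemma bessel_key_poly_lemma (n m : ℕ) (hm : Odd m) :
    ∑ k ∈ Finset.range (n+1), (-1:ℚ)^k * 2^k * (n.choose k) * ((2*n-k).choose m) = 0 := by
  have h1 : (((X:ℚ[X])^2 - 1)^n) = ∑ k ∈ Finset.range (n+1),
      Polynomial.C ((-1:ℚ)^k * 2^k * (n.choose k)) * (X+1)^(2*n-k) := by
    have hsplit : ((X:ℚ[X])^2 - 1)^n = ((-2 : ℚ[X]) + (X+1))^n * (X+1)^n := by
      rw [← mul_pow]; congr 1; ring
    rw [hsplit, add_pow, Finset.sum_mul]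
    apply Finset.sum_congr rfl
    intro k hk
    have hk' : k ≤ n := Nat.lt_succ_iff.mp (Finset.mem_range.mp hk)
    have hp : (X+1:ℚ[X])^(n-k) * (X+1)^n = (X+1)^(2*n-k) := by
      rw [← pow_add]; congr 1; omega
    have hC : Polynomial.C ((-1:ℚ)^k * 2^k * (n.choose k)) = (-2:ℚ[X])^k * (n.choose k) := by
      rw [← neg_pow]
      simp [map_mul, map_pow, map_neg, map_ofNat]
    rw [hC, ← hp]; ring
  have h2 := congrArg (fun p => Polynomial.coeff p m) h1
  simp only [finset_sum_coeff, coeff_C_mul, coeff_X_add_one_pow] at h2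
  rw [← h2]
  rw [show ((X:ℚ[X])^2 - 1) = X^2 + (-1) by ring, add_pow, finset_sum_coeff]
  apply Finset.sum_eq_zero; intro j hj
  have hterm : ((X:ℚ[X])^2)^j * (-1)^(n-j) * ((n.choose j : ℚ[X]))
      = Polynomial.C ((-1:ℚ)^(n-j) * (n.choose j)) * X^(2*j) := by
    rw [← pow_mul]
    simp [map_mul, map_pow, map_neg, map_one]
    ring
  rw [hterm, coeff_C_mul, coeff_X_pow]
  obtain ⟨t, ht⟩ := hm
  simp only [mul_ite, mul_one, mul_zero, ite_eq_right_iff]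
  intro h
  omega

theorem bessel_coefficients_solve_linear_system (n : ℕ) (hn : 1 ≤ n) (a : ℕ → ℚ)
    (ha0 : a 0 = 1)
    (hak : ∀ k, 1 ≤ k → k ≤ n →
      a k = (n.choose k : ℚ) * ((2 * n - k).factorial : ℚ) / ((2 * n).factorial : ℚ) * 2 ^ k)
    (l : ℕ) (hl : Odd l) (hl1 : 1 ≤ l) (hl2 : l ≤ 2 * n - 1) :
    ∑ k ∈ Finset.range (min l n + 1),
      2 * (-1 : ℚ) ^ (k + 1) / ((l - k).factorial : ℚ) * a k = 0 := by
  have hl2n : l ≤ 2 * n := by omega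
  set m := 2 * n - l with hm_def
  have hmodd : Odd m := Nat.Even.sub_odd hl2n (even_two_mul n) hl
  have hfac2n : (((2*n).factorial : ℚ)) ≠ 0 := Nat.cast_ne_zero.mpr (Nat.factorial_ne_zero _)
  set c : ℚ := -2 * (m.factorial : ℚ) / ((2*n).factorial : ℚ) with hc_def
  have hterm : ∀ k ∈ Finset.range (min l n + 1),
      2 * (-1 : ℚ) ^ (k + 1) / ((l - k).factorial : ℚ) * a k
        = c * ((-1:ℚ)^k * 2^k * (n.choose k) * ((2*n-k).choose m)) := by
    intro k hk
    have hkl : k ≤ l := by have := Finset.mem_range.mp hk; omega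
    have hkn : k ≤ n := by have := Finset.mem_range.mp hk; omega
    have hak' : a k = (n.choose k : ℚ) * ((2 * n - k).factorial : ℚ) / ((2 * n).factorial : ℚ) * 2 ^ k := by
      rcases Nat.eq_zero_or_pos k with rfl | hkpos
      · rw [ha0]; simp [div_self hfac2n]
      · exact hak k hkpos hkn
    rw [hak']
    have h1 : m ≤ 2 * n - k := by omega
    have hchoose := Nat.choose_mul_factorial_mul_factorial h1
    rw [show (2 * n - k) - m = l - k from by omega] at hchoose
    have hcast : (((2*n-k).choose m : ℚ)) * (m.factorial : ℚ) * ((l-k).factorial : ℚ)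
        = ((2*n-k).factorial : ℚ) := by exact_mod_cast congrArg (Nat.cast : ℕ → ℚ) hchoose
    rw [← hcast]
    have hlk : ((l-k).factorial : ℚ) ≠ 0 := Nat.cast_ne_zero.mpr (Nat.factorial_ne_zero _)
    rw [hc_def]
    field_simp
    ring
  rw [Finset.sum_congr rfl hterm]
  have hsubset : Finset.range (min l n + 1) ⊆ Finset.range (n+1) :=
    Finset.range_subset_range.mpr (by omega)
  rw [Finset.sum_subset hsubset ?_]
  · rw [← Finset.mul_sum, bessel_key_poly_lemma n m hmodd, mul_zero]
  · intro k hk1 hk2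
    have hkn : k ≤ n := by have := Finset.mem_range.mp hk1; omega
    have hkl : l < k := by
      simp only [Finset.mem_range, not_lt] at hk2
      omega
    have : 2 * n - k < m := by omega
    rw [Nat.choose_eq_zero_of_lt this]
    simp
end

section
/- Let A, Ã ∈ ℂ^{m×p} (m ≥ p) be full-rank matrices with polar decompositions A = UH and Ã = ŨH̃, where U, Ũ have orthonormal columns and H, H̃ are Hermitian positive-definite. Then ‖U − Ũ‖_F ≤ 2/(σ_p(A) + σ_p(Ã)) · ‖A − Ã‖_F, where σ_p denotes the smallest singular value and ‖·‖_F the Frobenius norm. -/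
open Matrix
open scoped ComplexOrder

/-- Frobenius norm of a complex matrix. -/
noncomputable def frob {m p : ℕ} (A : Matrix (Fin m) (Fin p) ℂ) : ℝ :=
  Real.sqrt (∑ i, ∑ j, ‖A i j‖ ^ 2)

/-- Euclidean norm of a complex vector. -/
noncomputable def vnorm {p : ℕ} (x : Fin p → ℂ) : ℝ :=
  Real.sqrt (∑ i, ‖x i‖ ^ 2)

/-- The smallest singular value of an `m × p` matrix (`m ≥ p`), characterized as the
infimum of `‖A x‖` over unit vectors `x`. -/
noncomputable def sigmaMin {m p : ℕ} (A : Matrix (Fin m) (Fin p) ℂ) : ℝ :=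
  sInf {r : ℝ | ∃ x : Fin p → ℂ, vnorm x = 1 ∧ r = vnorm (A.mulVec x)}

/-! Put `D = U - U'` and `E = A - A'`. Expanding with `Uᴴ U = U'ᴴ U' = 1` gives
`tr (H Dᴴ D) + tr (Dᴴ D H') = 2 Re tr (Dᴴ E)`. Since `σ_p(A) = σ_p(H)` is at most every
eigenvalue of `H`, we have `H ≥ σ_p(A) • 1` in the Loewner order, and `Dᴴ D ≥ 0`, so the
left side is at least `(σ_p(A) + σ_p(A')) ‖D‖_F²`; Cauchy–Schwarz bounds the right side by
`2 ‖D‖_F ‖E‖_F`. -/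

lemma re_sum_star_mul_le_sqrt_mul_sqrt {ι : Type*} [Fintype ι] (x y : ι → ℂ) :
    (∑ i, star (x i) * y i).re ≤ √(∑ i, ‖x i‖ ^ 2) * √(∑ i, ‖y i‖ ^ 2) := by
  rw [Complex.re_sum]
  calc ∑ i, (star (x i) * y i).re ≤ ∑ i, ‖x i‖ * ‖y i‖ :=
        Finset.sum_le_sum fun i _ => by
          simpa only [norm_mul, norm_star] using Complex.re_le_norm (star (x i) * y i)
    _ ≤ _ := Real.sum_mul_le_sqrt_mul_sqrt _ _ _

lemma sum_norm_sq_eq_re_dotProduct {ι : Type*} [Fintype ι] (x : ι → ℂ) :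
    ∑ i, ‖x i‖ ^ 2 = (star x ⬝ᵥ x).re := by
  simp [dotProduct, Complex.re_sum, Complex.conj_mul', ← Complex.ofReal_pow]

lemma trace_conjTranspose_mul_eq_sum {m p R : Type*} [Fintype m] [Fintype p]
    [NonUnitalNonAssocSemiring R] [Star R] (D E : Matrix m p R) :
    trace (Dᴴ * E) = ∑ i, ∑ j, star (D i j) * E i j := by
  simp only [trace, diag, mul_apply, conjTranspose_apply]
  exact Finset.sum_comm

section Frobenius

variable {m p : ℕ}

lemma frob_sq_eq_re_trace (D : Matrix (Fin m) (Fin p) ℂ) :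
    frob D ^ 2 = (trace (Dᴴ * D)).re := by
  rw [frob, Real.sq_sqrt (by positivity), trace_conjTranspose_mul_eq_sum]
  simp [Complex.re_sum, Complex.conj_mul', ← Complex.ofReal_pow]

lemma re_trace_conjTranspose_mul_le_frob_mul_frob (D E : Matrix (Fin m) (Fin p) ℂ) :
    (trace (Dᴴ * E)).re ≤ frob D * frob E := by
  simpa only [frob, Fintype.sum_prod_type, trace_conjTranspose_mul_eq_sum] using
    re_sum_star_mul_le_sqrt_mul_sqrt (fun ij : Fin m × Fin p => D ij.1 ij.2)
      (fun ij => E ij.1 ij.2)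

end Frobenius

section EuclideanNorm

variable {p : ℕ}

lemma vnorm_sq (x : Fin p → ℂ) : vnorm x ^ 2 = (star x ⬝ᵥ x).re := by
  rw [vnorm, Real.sq_sqrt (by positivity), sum_norm_sq_eq_re_dotProduct]

lemma re_dotProduct_le_vnorm_mul_vnorm (x y : Fin p → ℂ) :
    (star x ⬝ᵥ y).re ≤ vnorm x * vnorm y :=
  re_sum_star_mul_le_sqrt_mul_sqrt x y

lemma vnorm_smul (r : ℝ) (x : Fin p → ℂ) : vnorm (r • x) = |r| * vnorm x := by
  simp only [vnorm, Pi.smul_apply, norm_smul, mul_pow, ← Finset.mul_sum, Real.norm_eq_abs,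
    sq_abs]
  rw [Real.sqrt_mul (sq_nonneg r), Real.sqrt_sq_eq_abs]

lemma vnorm_mulVec_of_conjTranspose_mul_self_eq_one {m : ℕ} {U : Matrix (Fin m) (Fin p) ℂ}
    (hU : Uᴴ * U = 1) (x : Fin p → ℂ) : vnorm (U *ᵥ x) = vnorm x := by
  rw [vnorm, vnorm, sum_norm_sq_eq_re_dotProduct, sum_norm_sq_eq_re_dotProduct, star_mulVec,
    dotProduct_mulVec, vecMul_vecMul, hU, vecMul_one]

lemma vnorm_eigenvectorBasis {H : Matrix (Fin p) (Fin p) ℂ} (hH : H.IsHermitian) (i : Fin p) :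
    vnorm ⇑(hH.eigenvectorBasis i) = 1 := by
  rw [vnorm, ← EuclideanSpace.norm_eq]
  exact hH.eigenvectorBasis.orthonormal.1 i

end EuclideanNorm

namespace Matrix

variable {n 𝕜 : Type*} [Fintype n] [RCLike 𝕜]

lemma PosSemidef.re_trace_mul_nonneg {P N : Matrix n n 𝕜} (hP : P.PosSemidef)
    (hN : N.PosSemidef) : 0 ≤ RCLike.re (trace (P * N)) := by
  classical
  obtain ⟨B, rfl⟩ : ∃ B : Matrix n n 𝕜, P = Bᴴ * B := by
    open scoped MatrixOrder Matrix.Norms.L2Operator in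
    exact CStarAlgebra.nonneg_iff_eq_star_mul_self.mp hP.nonneg
  rw [Matrix.mul_assoc, trace_mul_comm]
  exact (RCLike.nonneg_iff.mp (hN.mul_mul_conjTranspose_same B).trace_nonneg).1

variable [DecidableEq n]

lemma IsHermitian.posSemidef_sub_smul_one {H : Matrix n n 𝕜} (hH : H.IsHermitian) {c : ℝ}
    (hc : ∀ i, c ≤ hH.eigenvalues i) : (H - (c : 𝕜) • 1).PosSemidef := by
  open scoped MatrixOrder Matrix.Norms.L2Operator in
  have : algebraMap ℝ (Matrix n n 𝕜) c ≤ H := by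
    rw [algebraMap_le_iff_le_spectrum (p := IsSelfAdjoint) hH,
      hH.spectrum_real_eq_range_eigenvalues]
    rintro _ ⟨i, rfl⟩
    exact hc i
  simpa [Matrix.le_iff, Algebra.algebraMap_eq_smul_one] using this

lemma IsHermitian.mul_re_trace_le_re_trace_mul {H N : Matrix n n 𝕜} (hH : H.IsHermitian)
    {c : ℝ} (hc : ∀ i, c ≤ hH.eigenvalues i) (hN : N.PosSemidef) :
    c * RCLike.re (trace N) ≤ RCLike.re (trace (H * N)) := by
  have hsplit : H * N = (H - (c : 𝕜) • 1) * N + (c : 𝕜) • N := by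
    rw [Matrix.sub_mul, Matrix.smul_mul, Matrix.one_mul, sub_add_cancel]
  have := (hH.posSemidef_sub_smul_one hc).re_trace_mul_nonneg hN
  rw [hsplit, trace_add, trace_smul, map_add, smul_eq_mul, RCLike.re_ofReal_mul]
  linarith

end Matrix

section SmallestSingularValue

variable {p : ℕ} {H : Matrix (Fin p) (Fin p) ℂ}

lemma sigmaMin_mul_of_conjTranspose_mul_self_eq_one {m k : ℕ} {U : Matrix (Fin m) (Fin k) ℂ}
    (hU : Uᴴ * U = 1) (B : Matrix (Fin k) (Fin p) ℂ) : sigmaMin (U * B) = sigmaMin B := by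
  simp only [sigmaMin, ← mulVec_mulVec, vnorm_mulVec_of_conjTranspose_mul_self_eq_one hU]

lemma Matrix.IsHermitian.sigmaMin_le_abs_eigenvalues (hH : H.IsHermitian) (i : Fin p) :
    sigmaMin H ≤ |hH.eigenvalues i| := by
  refine csInf_le ⟨0, ?_⟩ ⟨_, vnorm_eigenvectorBasis hH i, ?_⟩
  · rintro r ⟨x, -, rfl⟩
    exact Real.sqrt_nonneg _
  · rw [hH.mulVec_eigenvectorBasis, vnorm_smul, vnorm_eigenvectorBasis, mul_one]

lemma Matrix.PosDef.sigmaMin_le_eigenvalues (hH : H.PosDef) (i : Fin p) :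
    sigmaMin H ≤ hH.1.eigenvalues i :=
  (hH.1.sigmaMin_le_abs_eigenvalues i).trans_eq (abs_of_pos (hH.eigenvalues_pos i))

lemma le_vnorm_mulVec_of_posSemidef_sub_smul_one {c : ℝ} (hc : (H - (c : ℂ) • 1).PosSemidef)
    {x : Fin p → ℂ} (hx : vnorm x = 1) : c ≤ vnorm (H *ᵥ x) := by
  have hxx : (star x ⬝ᵥ x).re = 1 := by rw [← vnorm_sq, hx, one_pow]
  have hquad := hc.re_dotProduct_nonneg x
  rw [sub_mulVec, smul_mulVec, one_mulVec, dotProduct_sub, dotProduct_smul, map_sub,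
    smul_eq_mul, RCLike.re_to_complex, RCLike.re_to_complex, Complex.re_ofReal_mul, hxx] at hquad
  have hcs := re_dotProduct_le_vnorm_mul_vnorm x (H *ᵥ x)
  rw [hx, one_mul] at hcs
  linarith

lemma Matrix.PosDef.sigmaMin_pos [NeZero p] (hH : H.PosDef) : 0 < sigmaMin H := by
  obtain ⟨i₀, hi₀⟩ := Finite.exists_min hH.1.eigenvalues
  refine (hH.eigenvalues_pos i₀).trans_le
    (le_csInf ⟨_, _, vnorm_eigenvectorBasis hH.1 i₀, rfl⟩ ?_)
  rintro r ⟨x, hx, rfl⟩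
  exact le_vnorm_mulVec_of_posSemidef_sub_smul_one (hH.1.posSemidef_sub_smul_one hi₀) hx

end SmallestSingularValue

lemma trace_polarFactor_identity {m p R : Type*} [Fintype m] [Fintype p] [DecidableEq p]
    [CommRing R] [StarRing R] {U U' : Matrix m p R} {H H' : Matrix p p R} (hU : Uᴴ * U = 1)
    (hU' : U'ᴴ * U' = 1) (hH : H.IsHermitian) (hH' : H'.IsHermitian) :
    trace (H * ((U - U')ᴴ * (U - U'))) + trace ((U - U')ᴴ * (U - U') * H') =
      trace ((U - U')ᴴ * (U * H - U' * H')) + star (trace ((U - U')ᴴ * (U * H - U' * H'))) := by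
  set W := Uᴴ * U'
  have hW : Wᴴ = U'ᴴ * U := by simp [W]
  have hDD : (U - U')ᴴ * (U - U') = 1 + 1 - W - Wᴴ := by
    simp only [hW, W, conjTranspose_sub, Matrix.sub_mul, Matrix.mul_sub, hU, hU']
    abel
  have hDE : (U - U')ᴴ * (U * H - U' * H') = H + H' - W * H' - Wᴴ * H := by
    simp only [hW, W, conjTranspose_sub, Matrix.sub_mul, Matrix.mul_sub, ← Matrix.mul_assoc,
      hU, hU', Matrix.one_mul]
    abel
  rw [← trace_conjTranspose, hDD, hDE]
  simp only [conjTranspose_sub, conjTranspose_add, conjTranspose_mul, hH.eq, hH'.eq,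
    conjTranspose_conjTranspose, Matrix.mul_sub, Matrix.sub_mul, Matrix.mul_add, Matrix.add_mul,
    Matrix.mul_one, Matrix.one_mul, trace_sub, trace_add]
  rw [trace_mul_comm H Wᴴ, trace_mul_comm Wᴴ H']
  ring

lemma le_div_of_mul_sq_le_mul {a b s : ℝ} (hs : 0 < s) (ha : 0 ≤ a) (hb : 0 ≤ b)
    (h : s * a ^ 2 ≤ a * b) : a ≤ b / s := by
  rw [le_div_iff₀ hs]
  rcases ha.eq_or_lt with rfl | ha
  · simpa using hb
  · nlinarith

theorem polar_factor_perturbation_general {m p : ℕ}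
    (A A' U U' : Matrix (Fin m) (Fin p) ℂ) (H H' : Matrix (Fin p) (Fin p) ℂ)
    (hAUH : A = U * H) (hU : Uᴴ * U = 1) (hH : H.PosDef)
    (hA'UH : A' = U' * H') (hU' : U'ᴴ * U' = 1) (hH' : H'.PosDef) :
    frob (U - U') ≤ 2 / (sigmaMin A + sigmaMin A') * frob (A - A') := by
  subst hAUH hA'UH
  rcases Nat.eq_zero_or_pos p with rfl | hp
  · simp [frob]
  have : NeZero p := ⟨hp.ne'⟩
  rw [sigmaMin_mul_of_conjTranspose_mul_self_eq_one hU,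
    sigmaMin_mul_of_conjTranspose_mul_self_eq_one hU', div_mul_eq_mul_div]
  have hN := posSemidef_conjTranspose_mul_self (U - U')
  have hHN := hH.1.mul_re_trace_le_re_trace_mul hH.sigmaMin_le_eigenvalues hN
  have hH'N := hH'.1.mul_re_trace_le_re_trace_mul hH'.sigmaMin_le_eigenvalues hN
  rw [trace_mul_comm H'] at hH'N
  simp only [RCLike.re_to_complex, ← frob_sq_eq_re_trace] at hHN hH'N
  have hid := congrArg Complex.re (trace_polarFactor_identity hU hU' hH.1 hH'.1)
  simp only [Complex.add_re, Complex.star_def, Complex.conj_re] at hid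
  have hcs := re_trace_conjTranspose_mul_le_frob_mul_frob (U - U') (U * H - U' * H')
  refine le_div_of_mul_sq_le_mul (add_pos hH.sigmaMin_pos hH'.sigmaMin_pos)
    (Real.sqrt_nonneg _) (mul_nonneg zero_le_two (Real.sqrt_nonneg _)) ?_
  linarith

theorem polar_factor_perturbation {m p : ℕ} (hmp : p ≤ m)
    (A A' U U' : Matrix (Fin m) (Fin p) ℂ) (H H' : Matrix (Fin p) (Fin p) ℂ)
    (hA : A.rank = p) (hA' : A'.rank = p)
    (hAUH : A = U * H) (hU : Uᴴ * U = 1) (hH : H.PosDef)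
    (hA'UH : A' = U' * H') (hU' : U'ᴴ * U' = 1) (hH' : H'.PosDef) :
    frob (U - U') ≤ 2 / (sigmaMin A + sigmaMin A') * frob (A - A') :=
  polar_factor_perturbation_general A A' U U' H H' hAUH hU hH hA'UH hU' hH'
end

section
/- Let A ∈ ℂ^{m×p} (m ≥ p) be full rank with polar decomposition A = UH (U with orthonormal columns, H Hermitian positive-definite), and let Ũ ∈ ℂ^{m×p} have orthonormal columns with ‖A − Ũ‖_F < 1. Then the Hermitian part sym(Ũ*A) = (Ũ*A + (Ũ*A)*)/2 is positive definite. -/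
/-!
Write `A = Ũ + E`. Since `Ũ` is an isometry, `Re x*Ũ*A x = ‖Ũx‖² + Re ⟪Ũx, Ex⟫ ≥ ‖x‖² - ‖x‖ ‖Ex‖`,
and the Frobenius norm dominates the operator norm, so this is at least `(1 - ‖E‖_F) ‖x‖² > 0`.
-/

open Matrix
open scoped ComplexOrder

attribute [local instance] Matrix.frobeniusNormedAddCommGroup

open WithLp

theorem frob_eq_frobenius_norm {m p : ℕ} (A : Matrix (Fin m) (Fin p) ℂ) : frob A = ‖A‖ := by
  simp [frob, frobenius_norm_def, Real.sqrt_eq_rpow]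

namespace Matrix

variable {𝕜 m n : Type*} [RCLike 𝕜] [Fintype m] [Fintype n]

theorem frobenius_norm_toLp_mulVec_le (A : Matrix m n 𝕜) (x : n → 𝕜) :
    ‖toLp 2 (A *ᵥ x)‖ ≤ ‖A‖ * ‖toLp 2 x‖ := by
  simpa [← replicateCol_mulVec (ι := Unit)] using frobenius_norm_mul A (replicateCol Unit x)

theorem star_dotProduct_conjTranspose_mulVec (Q : Matrix m n 𝕜) (x : n → 𝕜) (y : m → 𝕜) :
    star x ⬝ᵥ (Qᴴ *ᵥ y) = inner 𝕜 (toLp 2 (Q *ᵥ x)) (toLp 2 y) := by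
  rw [EuclideanSpace.inner_toLp_toLp, dotProduct_comm y, star_mulVec, dotProduct_mulVec]

theorem norm_toLp_mulVec_of_conjTranspose_mul_self_eq_one [DecidableEq n] {Q : Matrix m n 𝕜}
    (hQ : Qᴴ * Q = 1) (x : n → 𝕜) : ‖toLp 2 (Q *ᵥ x)‖ = ‖toLp 2 x‖ := by
  have h : inner 𝕜 (toLp 2 (Q *ᵥ x)) (toLp 2 (Q *ᵥ x)) = inner 𝕜 (toLp 2 x) (toLp 2 x) := by
    rw [← star_dotProduct_conjTranspose_mulVec, mulVec_mulVec, hQ, one_mulVec,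
      EuclideanSpace.inner_toLp_toLp, dotProduct_comm]
  have hre := congrArg RCLike.re h
  rw [inner_self_eq_norm_sq, inner_self_eq_norm_sq] at hre
  exact (sq_eq_sq₀ (norm_nonneg _) (norm_nonneg _)).mp hre

theorem re_star_dotProduct_conjTranspose_mul_mulVec_ge [DecidableEq n] {Q : Matrix m n 𝕜}
    (hQ : Qᴴ * Q = 1) (A : Matrix m n 𝕜) (x : n → 𝕜) :
    (1 - ‖A - Q‖) * ‖toLp 2 x‖ ^ 2 ≤ RCLike.re (star x ⬝ᵥ (Qᴴ * A) *ᵥ x) := by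
  set v := toLp 2 (Q *ᵥ x)
  set w := toLp 2 ((A - Q) *ᵥ x)
  have hsplit : star x ⬝ᵥ (Qᴴ * A) *ᵥ x = inner 𝕜 v v + inner 𝕜 v w := by
    rw [← mulVec_mulVec, star_dotProduct_conjTranspose_mulVec, ← inner_add_right, ← toLp_add,
      ← add_mulVec, add_sub_cancel]
  have hv : ‖v‖ = ‖toLp 2 x‖ := norm_toLp_mulVec_of_conjTranspose_mul_self_eq_one hQ x
  have hw : ‖w‖ ≤ ‖A - Q‖ * ‖toLp 2 x‖ := frobenius_norm_toLp_mulVec_le (A - Q) x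
  have hcs : -(‖v‖ * ‖w‖) ≤ RCLike.re (inner 𝕜 v w) := by
    simpa [neg_le] using re_inner_le_norm (𝕜 := 𝕜) v (-w)
  rw [hsplit, map_add, inner_self_eq_norm_sq (𝕜 := 𝕜), hv]
  rw [hv] at hcs
  calc (1 - ‖A - Q‖) * ‖toLp 2 x‖ ^ 2
      = ‖toLp 2 x‖ ^ 2 - ‖toLp 2 x‖ * (‖A - Q‖ * ‖toLp 2 x‖) := by ring
    _ ≤ ‖toLp 2 x‖ ^ 2 - ‖toLp 2 x‖ * ‖w‖ := by gcongr
    _ ≤ ‖toLp 2 x‖ ^ 2 + RCLike.re (inner 𝕜 v w) := by linarith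

theorem posDef_half_smul_add_conjTranspose_of_re_pos {B : Matrix n n 𝕜}
    (hB : ∀ x ≠ 0, 0 < RCLike.re (star x ⬝ᵥ B *ᵥ x)) : ((1 / 2 : 𝕜) • (B + Bᴴ)).PosDef := by
  refine posDef_iff_dotProduct_mulVec.mpr ⟨?_, fun x hx => ?_⟩
  · exact (isHermitian_add_transpose_self B).smul (by simp [IsSelfAdjoint])
  · have hconj : star x ⬝ᵥ Bᴴ *ᵥ x = starRingEnd 𝕜 (star x ⬝ᵥ B *ᵥ x) := by
      rw [starRingEnd_apply, ← star_dotProduct_star, star_star, star_mulVec, dotProduct_mulVec,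
        dotProduct_comm]
    rw [smul_mulVec, dotProduct_smul, add_mulVec, dotProduct_add, hconj, RCLike.add_conj,
      smul_eq_mul, ← mul_assoc, one_div, inv_mul_cancel₀ two_ne_zero, one_mul]
    exact RCLike.ofReal_pos.mpr (hB x hx)

end Matrix

theorem sym_part_posDef_general {m p : ℕ}
    (A U' : Matrix (Fin m) (Fin p) ℂ)
    (hU' : U'ᴴ * U' = 1) (hclose : frob (A - U') < 1) :
    ((1 / 2 : ℂ) • (U'ᴴ * A + (U'ᴴ * A)ᴴ)).PosDef := by
  refine posDef_half_smul_add_conjTranspose_of_re_pos fun x hx => ?_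
  have hx' : 0 < ‖toLp 2 x‖ := by simpa using hx
  rw [frob_eq_frobenius_norm] at hclose
  calc 0 < (1 - ‖A - U'‖) * ‖toLp 2 x‖ ^ 2 := mul_pos (sub_pos.mpr hclose) (pow_pos hx' 2)
    _ ≤ _ := re_star_dotProduct_conjTranspose_mul_mulVec_ge hU' A x

theorem sym_part_posDef {m p : ℕ} (hmp : p ≤ m)
    (A U U' : Matrix (Fin m) (Fin p) ℂ) (H : Matrix (Fin p) (Fin p) ℂ)
    (hA : A.rank = p)
    (hAUH : A = U * H) (hU : Uᴴ * U = 1) (hH : H.PosDef)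
    (hU' : U'ᴴ * U' = 1) (hclose : frob (A - U') < 1) :
    ((1 / 2 : ℂ) • (U'ᴴ * A + (U'ᴴ * A)ᴴ)).PosDef :=
  sym_part_posDef_general A U' hU' hclose
end

section
/- Let Θ_n(z) = ∑_{k=0}^n C(n,k) (2n−k)!/(2n)! (2z)^k, K ∈ ℂ^{(m−p)×p}, Z = [[0,−K*],[K,0]], and t ∈ ℝ. Then Θ_n(tZ)·[I;0] = [α_n(t²K*K); tK β_n(t²K*K)], where α_n(z) = ∑_{j=0}^{⌊n/2⌋} a_{2j} (−z)^j, β_n(z) = ∑_{j=0}^{⌊(n−1)/2⌋} a_{2j+1} (−z)^j, and a_k = C(n,k)(2n−k)!/(2n)! · 2^k. -/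
/-! Since `Z` is block-antidiagonal, `(tZ)^{2j}[I;0] = [(-t²K*K)^j; 0]` and
`(tZ)^{2j+1}[I;0] = [0; tK(-t²K*K)^j]`; splitting `Θ_n` into its even and odd parts gives the
formula. -/

open Matrix Polynomial

/-- The coefficients `a_k = C(n,k) (2n-k)!/(2n)! 2^k`. -/
noncomputable def besselCoeff (n k : ℕ) : ℂ :=
  (n.choose k : ℂ) * ((2 * n - k).factorial : ℂ) / ((2 * n).factorial : ℂ) * 2 ^ k

/-- The scaled Bessel polynomial `Θ_n(z) = ∑_{k=0}^n C(n,k) (2n-k)!/(2n)! (2z)^k`. -/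
noncomputable def Theta (n : ℕ) : Polynomial ℂ :=
  ∑ k ∈ Finset.range (n + 1), Polynomial.C (besselCoeff n k) * X ^ k

/-- `α_n(z) = ∑_{j=0}^{⌊n/2⌋} a_{2j} (−z)^j`. -/
noncomputable def alphaPoly (n : ℕ) : Polynomial ℂ :=
  ∑ j ∈ Finset.range (n / 2 + 1), Polynomial.C (besselCoeff n (2 * j)) * (-X) ^ j

/-- `β_n(z) = ∑_{j=0}^{⌊(n−1)/2⌋} a_{2j+1} (−z)^j`. -/
noncomputable def betaPoly (n : ℕ) : Polynomial ℂ :=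
  ∑ j ∈ Finset.range ((n - 1) / 2 + 1), Polynomial.C (besselCoeff n (2 * j + 1)) * (-X) ^ j

namespace Matrix

variable {α R m₁ m₂ n : Type*}

lemma fromRows_add [Add R] (A₁ B₁ : Matrix m₁ n R) (A₂ B₂ : Matrix m₂ n R) :
    fromRows A₁ A₂ + fromRows B₁ B₂ = fromRows (A₁ + B₁) (A₂ + B₂) := by
  ext (i | i) j <;> simp

lemma fromRows_smul [SMul α R] (c : α) (A₁ : Matrix m₁ n R) (A₂ : Matrix m₂ n R) :
    c • fromRows A₁ A₂ = fromRows (c • A₁) (c • A₂) := by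
  ext (i | i) j <;> simp

section AntidiagonalBlocks

variable {p q : Type*} [Fintype p] [Fintype q] [DecidableEq p] [DecidableEq q]

lemma fromBlocks_zero_pow_two_mul_mul_fromRows [Semiring R] (B : Matrix p q R) (C : Matrix q p R)
    (j : ℕ) :
    fromBlocks 0 B C 0 ^ (2 * j) * fromRows (1 : Matrix p p R) (0 : Matrix q p R) =
      fromRows ((B * C) ^ j) 0 := by
  induction j with
  | zero => simp
  | succ j ih =>
    rw [Nat.mul_succ, pow_succ', pow_succ', Matrix.mul_assoc, Matrix.mul_assoc, ih]
    simp [fromBlocks_mul_fromRows, pow_succ', Matrix.mul_assoc]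

lemma fromBlocks_zero_pow_two_mul_add_one_mul_fromRows [Semiring R] (B : Matrix p q R)
    (C : Matrix q p R) (j : ℕ) :
    fromBlocks 0 B C 0 ^ (2 * j + 1) * fromRows (1 : Matrix p p R) (0 : Matrix q p R) =
      fromRows 0 (C * (B * C) ^ j) := by
  rw [pow_succ', Matrix.mul_assoc, fromBlocks_zero_pow_two_mul_mul_fromRows,
    fromBlocks_mul_fromRows]
  simp

lemma sum_smul_fromBlocks_zero_pow_mul_fromRows [CommSemiring R] (B : Matrix p q R)
    (C : Matrix q p R) (c : ℕ → R) (N : ℕ) :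
    (∑ k ∈ Finset.range (2 * N), c k • fromBlocks 0 B C 0 ^ k) *
        fromRows (1 : Matrix p p R) (0 : Matrix q p R) =
      fromRows (∑ j ∈ Finset.range N, c (2 * j) • (B * C) ^ j)
        (C * ∑ j ∈ Finset.range N, c (2 * j + 1) • (B * C) ^ j) := by
  induction N with
  | zero => simp
  | succ N ih =>
    rw [Nat.mul_succ, Finset.sum_range_succ, Finset.sum_range_succ, Matrix.add_mul, Matrix.add_mul,
      ih, Matrix.smul_mul, Matrix.smul_mul, fromBlocks_zero_pow_two_mul_mul_fromRows,
      fromBlocks_zero_pow_two_mul_add_one_mul_fromRows]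
    simp [Finset.sum_range_succ, fromRows_add, fromRows_smul, Matrix.mul_add]

end AntidiagonalBlocks

end Matrix

lemma besselCoeff_eq_zero_of_lt {n k : ℕ} (h : n < k) : besselCoeff n k = 0 := by
  simp [besselCoeff, Nat.choose_eq_zero_of_lt h]

lemma Theta_eq_sum_range_two_mul (n : ℕ) :
    Theta n = ∑ k ∈ Finset.range (2 * (n / 2 + 1)), C (besselCoeff n k) * X ^ k :=
  Finset.sum_subset (Finset.range_subset_range.mpr (by omega)) fun k _ hk => by
    rw [besselCoeff_eq_zero_of_lt (by simpa using hk), C_0, zero_mul]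

lemma betaPoly_eq_sum_range (n : ℕ) :
    betaPoly n = ∑ j ∈ Finset.range (n / 2 + 1), C (besselCoeff n (2 * j + 1)) * (-X) ^ j :=
  Finset.sum_subset (Finset.range_subset_range.mpr (by omega)) fun j _ hj => by
    rw [besselCoeff_eq_zero_of_lt (by simp at hj; omega), C_0, zero_mul]

lemma Polynomial.aeval_sum_C_mul_pow {R A ι : Type*} [CommSemiring R] [Semiring A] [Algebra R A]
    (x : A) (s : Finset ι) (c : ι → R) (f : ι → ℕ) (P : R[X]) :
    aeval x (∑ i ∈ s, C (c i) * P ^ f i) = ∑ i ∈ s, c i • aeval x P ^ f i := by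
  simp [Algebra.smul_def]

theorem theta_block_formula {p q : ℕ} (n : ℕ) (K : Matrix (Fin q) (Fin p) ℂ) (t : ℝ)
    (Z : Matrix (Fin p ⊕ Fin q) (Fin p ⊕ Fin q) ℂ) (hZ : Z = fromBlocks 0 (-Kᴴ) K 0) :
    aeval ((t : ℂ) • Z) (Theta n) *
        fromRows (1 : Matrix (Fin p) (Fin p) ℂ) (0 : Matrix (Fin q) (Fin p) ℂ) =
      fromRows (aeval (((t : ℂ)) ^ 2 • (Kᴴ * K)) (alphaPoly n))
        ((t : ℂ) • (K * aeval (((t : ℂ)) ^ 2 • (Kᴴ * K)) (betaPoly n))) := by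
  have hZ' : (t : ℂ) • Z = fromBlocks 0 (-((t : ℂ) • Kᴴ)) ((t : ℂ) • K) 0 := by
    simp [hZ, fromBlocks_smul]
  have hBC : -((t : ℂ) • Kᴴ) * ((t : ℂ) • K) = -((t : ℂ) ^ 2 • (Kᴴ * K)) := by
    rw [Matrix.neg_mul, Matrix.smul_mul, Matrix.mul_smul, smul_smul, pow_two]
  rw [Theta_eq_sum_range_two_mul, betaPoly_eq_sum_range, alphaPoly, aeval_sum_C_mul_pow,
    aeval_sum_C_mul_pow, aeval_sum_C_mul_pow, aeval_X, hZ',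
    sum_smul_fromBlocks_zero_pow_mul_fromRows, hBC, Matrix.smul_mul, map_neg, aeval_X]
end

section
/- Let Ω ∈ ℂ^{m×m} be skew-Hermitian and s ∈ [0,1]. Then the skew-Hermitian part of e^{−stΩ}((1−s)I + s e^{tΩ}) equals ∑_{k odd} [((1−s)s^k(−1)^k + s(1−s)^k)/k!] (tΩ)^k; in particular, it vanishes identically when s = 1/2. -/
/-!
Since `-stΩ` commutes with `tΩ`, the matrix equals `(1-s) e^{-stΩ} + s e^{(1-s)tΩ}`. For real `c`
and skew-Hermitian `A`, `(e^{cA})ᴴ = e^{-cA}`, so the skew-Hermitian part of `e^{cA}` is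
`(e^{cA} - e^{-cA})/2`, the odd part of the exponential series. At `s = 1/2` the two odd
coefficients `(1-s)(-s)^k` and `s(1-s)^k` cancel.
-/

open Matrix NormedSpace
open scoped Nat

theorem hasSum_odd_exp_series {𝕂 𝔸 : Type*} [RCLike 𝕂] [NormedRing 𝔸] [NormedAlgebra 𝕂 𝔸]
    [CompleteSpace 𝔸] (x : 𝔸) :
    HasSum (fun k => if Odd k then (k !⁻¹ : 𝕂) • x ^ k else 0) ((2⁻¹ : 𝕂) • (exp x - exp (-x))) := by
  refine (((exp_series_hasSum_exp' (𝕂 := 𝕂) x).sub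
    (exp_series_hasSum_exp' (𝕂 := 𝕂) (-x))).const_smul (2⁻¹ : 𝕂)).congr_fun fun k => ?_
  rcases Nat.even_or_odd k with hk | hk
  · simp [hk.neg_pow, Nat.not_odd_iff_even.mpr hk]
  · rw [if_pos hk, hk.neg_pow, smul_neg, sub_neg_eq_add, ← two_smul 𝕂, smul_smul,
      inv_mul_cancel₀ two_ne_zero, one_smul]

-- `exp` only sees the topology, so any submultiplicative norm (here the operator norm) will do.
theorem Matrix.hasSum_odd_exp_series {n 𝕂 : Type*} [Fintype n] [DecidableEq n] [RCLike 𝕂]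
    (A : Matrix n n 𝕂) :
    HasSum (fun k => if Odd k then (k !⁻¹ : 𝕂) • A ^ k else 0) ((2⁻¹ : 𝕂) • (exp A - exp (-A))) :=
  open scoped Norms.Operator in _root_.hasSum_odd_exp_series A

theorem Matrix.hasSum_skewPart_exp {n : Type*} [Fintype n] [DecidableEq n]
    {A : Matrix n n ℂ} (hA : Aᴴ = -A) :
    HasSum (fun k => if Odd k then (k !⁻¹ : ℂ) • A ^ k else 0)
      ((2⁻¹ : ℂ) • (exp A - (exp A)ᴴ)) := by
  rw [← exp_conjTranspose, hA]
  exact Matrix.hasSum_odd_exp_series A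

theorem Matrix.exp_neg_smul_mul_interpolant {n : Type*} [Fintype n] [DecidableEq n]
    (c : ℂ) (A : Matrix n n ℂ) :
    exp (-c • A) * ((1 - c) • 1 + c • exp A) =
      (1 - c) • exp (-c • A) + c • exp ((1 - c) • A) := by
  rw [mul_add, mul_smul_comm, mul_smul_comm, mul_one,
    ← Matrix.exp_add_of_commute _ _ ((Commute.refl A).smul_left _)]
  congr 3
  module

theorem Matrix.skewPart_ofReal_smul_add {n : Type*} (a b : ℝ) (X Y : Matrix n n ℂ) :
    (2⁻¹ : ℂ) • (((a : ℂ) • X + (b : ℂ) • Y) - ((a : ℂ) • X + (b : ℂ) • Y)ᴴ) =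
      (a : ℂ) • ((2⁻¹ : ℂ) • (X - Xᴴ)) + (b : ℂ) • ((2⁻¹ : ℂ) • (Y - Yᴴ)) := by
  simp only [conjTranspose_add, conjTranspose_smul, Complex.star_def, Complex.conj_ofReal]
  module

theorem skew_part_interpolant_series_general {m : ℕ}
    (Ω : Matrix (Fin m) (Fin m) ℂ) (hΩ : Ωᴴ = -Ω)
    (s : ℝ) (t : ℝ) :
    (let M := NormedSpace.exp (-((s : ℂ) * t) • Ω) *
        (((1 : ℂ) - s) • (1 : Matrix (Fin m) (Fin m) ℂ) + (s : ℂ) • NormedSpace.exp ((t : ℂ) • Ω))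
    (1 / 2 : ℂ) • (M - Mᴴ) =
      ∑' k : ℕ, if Odd k then
          ((((1 - s) * s ^ k * (-1) ^ k + s * (1 - s) ^ k) / k.factorial : ℝ) : ℂ) •
            ((t : ℂ) • Ω) ^ k
        else 0) ∧
    (s = 1 / 2 →
      (let M := NormedSpace.exp (-((s : ℂ) * t) • Ω) *
          (((1 : ℂ) - s) • (1 : Matrix (Fin m) (Fin m) ℂ) + (s : ℂ) • NormedSpace.exp ((t : ℂ) • Ω))
      (1 / 2 : ℂ) • (M - Mᴴ) = 0)) := by
  dsimp only
  set A := (t : ℂ) • Ω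
  set M := exp (-((s : ℂ) * t) • Ω) * (((1 : ℂ) - s) • 1 + (s : ℂ) • exp A) with hM_def
  have hA (c : ℝ) : ((c : ℂ) • A)ᴴ = -((c : ℂ) • A) := by simp [A, hΩ]
  have hM : M = ((1 - s : ℝ) : ℂ) • exp (((-s : ℝ) : ℂ) • A) +
      (s : ℂ) • exp (((1 - s : ℝ) : ℂ) • A) := by
    rw [hM_def, show -((s : ℂ) * t) • Ω = -(s : ℂ) • A by rw [smul_smul, neg_mul],
      exp_neg_smul_mul_interpolant, Complex.ofReal_neg, Complex.ofReal_sub, Complex.ofReal_one]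
  have hseries : HasSum (fun k : ℕ => if Odd k then
          ((((1 - s) * s ^ k * (-1) ^ k + s * (1 - s) ^ k) / k.factorial : ℝ) : ℂ) • A ^ k
        else 0) ((1 / 2 : ℂ) • (M - Mᴴ)) := by
    rw [one_div, hM, skewPart_ofReal_smul_add]
    refine (((hasSum_skewPart_exp (hA (-s))).const_smul _).add
      ((hasSum_skewPart_exp (hA (1 - s))).const_smul _)).congr_fun fun k => ?_
    split_ifs
    · simp only [smul_pow, smul_smul, ← add_smul]
      congr 1
      push_cast
      ring
    · simp
  refine ⟨hseries.tsum_eq.symm, fun hs => ?_⟩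
  rw [← hseries.tsum_eq]
  refine (tsum_congr fun k => ?_).trans tsum_zero
  split_ifs with hk
  · rw [hs, hk.neg_one_pow]
    norm_num
  · rfl

theorem skew_part_interpolant_series {m : ℕ}
    (Ω : Matrix (Fin m) (Fin m) ℂ) (hΩ : Ωᴴ = -Ω)
    (s : ℝ) (hs : s ∈ Set.Icc (0 : ℝ) 1) (t : ℝ) :
    (let M := NormedSpace.exp (-((s : ℂ) * t) • Ω) *
        (((1 : ℂ) - s) • (1 : Matrix (Fin m) (Fin m) ℂ) + (s : ℂ) • NormedSpace.exp ((t : ℂ) • Ω))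
    (1 / 2 : ℂ) • (M - Mᴴ) =
      ∑' k : ℕ, if Odd k then
          ((((1 - s) * s ^ k * (-1) ^ k + s * (1 - s) ^ k) / k.factorial : ℝ) : ℂ) •
            ((t : ℂ) • Ω) ^ k
        else 0) ∧
    (s = 1 / 2 →
      (let M := NormedSpace.exp (-((s : ℂ) * t) • Ω) *
          (((1 : ℂ) - s) • (1 : Matrix (Fin m) (Fin m) ℂ) + (s : ℂ) • NormedSpace.exp ((t : ℂ) • Ω))
      (1 / 2 : ℂ) • (M - Mᴴ) = 0)) :=
  skew_part_interpolant_series_general Ω hΩ s t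
end
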